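/- arXiv:2006.07658 — 2 statements merged into one kernel-verified Lean document; each statement's English description precedes it below -/
import Mathlib

section
/- Let X, Y be Hilbert spaces, R ∈ B(X,Y), B ∈ B(Y) with ran B ⊆ ran R and ran B closed of finite codimension in Y. Let P be the orthogonal projection onto (ran B)^⊥. Then ran(PR) is finite-dimensional and there exists a finite-dimensional subspace Z ⊆ X with dim Z = dim ran(PR) and PR|_Z : Z → ran(PR) bijective; moreover P_Z := (PR|_Z)^{-1} PR is a bounded (indeed compact) projection on X with range Z. -/
/-!
Since `P` has finite rank, `T := P R` has finite-dimensional range. Any linear right inverse `L`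
of `T : X → ran T` is then continuous and injective, so `Z := ran L` is isomorphic to `ran T` via
`T`, and `P_Z := L T` is a finite-rank (hence compact) projection onto `Z` with `T P_Z = T`.
-/

noncomputable section

/-- The map `y ↦ P y` where `P` is the orthogonal projection of `Y` onto
`(ran B)^⊥`, viewed as an operator `Y → Y`. -/
def projPerpRange {Y : Type*} [NormedAddCommGroup Y] [InnerProductSpace ℂ Y]
    [CompleteSpace Y] (B : Y →L[ℂ] Y)
    [FiniteDimensional ℂ ((LinearMap.range (B : Y →ₗ[ℂ] Y))ᗮ)] : Y →L[ℂ] Y :=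
  ((LinearMap.range (B : Y →ₗ[ℂ] Y))ᗮ).subtypeL ∘L Submodule.orthogonalProjectionOnto (LinearMap.range (B : Y →ₗ[ℂ] Y))ᗮ

namespace ContinuousLinearMap

variable {𝕜 X F : Type*} [NontriviallyNormedField 𝕜]
  [NormedAddCommGroup X] [NormedSpace 𝕜 X] [NormedAddCommGroup F] [NormedSpace 𝕜 F]
  (T : X →L[𝕜] F)

theorem exists_rightInverse_rangeRestrict [CompleteSpace 𝕜]
    [FiniteDimensional 𝕜 (LinearMap.range (T : X →ₗ[𝕜] F))] :
    ∃ L : LinearMap.range (T : X →ₗ[𝕜] F) →L[𝕜] X, Function.RightInverse L T.rangeRestrict := by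
  obtain ⟨L, hL⟩ := T.rangeRestrict.exists_rightInverse_of_surjective (by simp)
  exact ⟨L, fun y => congr($hL y)⟩

theorem isCompactOperator_comp_rangeRestrict [ProperSpace 𝕜]
    [FiniteDimensional 𝕜 (LinearMap.range (T : X →ₗ[𝕜] F))]
    (L : LinearMap.range (T : X →ₗ[𝕜] F) →L[𝕜] X) : IsCompactOperator (L ∘L T.rangeRestrict) :=
  have := FiniteDimensional.proper 𝕜 (LinearMap.range (T : X →ₗ[𝕜] F))
  (isCompactOperator_of_locallyCompactSpace_dom T.rangeRestrict).clm_comp L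

section RightInverse

variable {T} {L : LinearMap.range (T : X →ₗ[𝕜] F) →L[𝕜] X}
  (hL : Function.RightInverse L T.rangeRestrict)
include hL

theorem apply_apply_of_rightInverse (y : LinearMap.range (T : X →ₗ[𝕜] F)) : T (L y) = y :=
  congr_arg Subtype.val (hL y)

theorem apply_apply_rangeRestrict_of_rightInverse (x : X) : T (L (T.rangeRestrict x)) = T x :=
  apply_apply_of_rightInverse hL _

theorem comp_rangeRestrict_idem_of_rightInverse :
    (L ∘L T.rangeRestrict) ∘L (L ∘L T.rangeRestrict) = L ∘L T.rangeRestrict := by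
  ext x
  exact congr_arg L (hL _)

theorem range_comp_rangeRestrict_of_rightInverse :
    LinearMap.range (L ∘L T.rangeRestrict : X →ₗ[𝕜] X) =
      LinearMap.range (L : LinearMap.range (T : X →ₗ[𝕜] F) →ₗ[𝕜] X) :=
  LinearMap.range_comp_of_range_eq_top _ (LinearMap.range_eq_top.2 hL.surjective)

theorem finrank_range_of_rightInverse :
    Module.finrank 𝕜 (LinearMap.range (L : LinearMap.range (T : X →ₗ[𝕜] F) →ₗ[𝕜] X)) =
      Module.finrank 𝕜 (LinearMap.range (T : X →ₗ[𝕜] F)) :=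
  LinearMap.finrank_range_of_inj hL.injective

theorem existsUnique_mem_range_apply_eq_of_rightInverse (y : F)
    (hy : y ∈ LinearMap.range (T : X →ₗ[𝕜] F)) :
    ∃! z : X, z ∈ LinearMap.range (L : LinearMap.range (T : X →ₗ[𝕜] F) →ₗ[𝕜] X) ∧ T z = y := by
  refine ⟨L ⟨y, hy⟩, ⟨LinearMap.mem_range_self _ _, apply_apply_of_rightInverse hL _⟩, ?_⟩
  rintro _ ⟨⟨w, rfl⟩, hw⟩
  obtain rfl : (w : F) = y := (apply_apply_of_rightInverse hL w).symm.trans hw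
  rfl

end RightInverse

end ContinuousLinearMap

instance finiteDimensional_range_projPerpRange_comp {X Y : Type*} [NormedAddCommGroup X]
    [NormedSpace ℂ X] [NormedAddCommGroup Y] [InnerProductSpace ℂ Y] [CompleteSpace Y]
    (R : X →L[ℂ] Y) (B : Y →L[ℂ] Y) [FiniteDimensional ℂ (LinearMap.range (B : Y →ₗ[ℂ] Y))ᗮ] :
    FiniteDimensional ℂ (LinearMap.range (projPerpRange B ∘L R : X →ₗ[ℂ] Y)) :=
  Submodule.finiteDimensional_of_le <| by
    rintro _ ⟨x, rfl⟩
    exact (Submodule.orthogonalProjectionOnto _ (R x)).2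

open ContinuousLinearMap in
theorem stmt11_general
    {X Y : Type*} [NormedAddCommGroup X] [InnerProductSpace ℂ X]
    [NormedAddCommGroup Y] [InnerProductSpace ℂ Y] [CompleteSpace Y]
    (R : X →L[ℂ] Y) (B : Y →L[ℂ] Y)
    [FiniteDimensional ℂ ((LinearMap.range (B : Y →ₗ[ℂ] Y))ᗮ)] :
    FiniteDimensional ℂ (LinearMap.range ((projPerpRange B ∘L R : X →L[ℂ] Y) : X →ₗ[ℂ] Y)) ∧
      ∃ Z : Submodule ℂ X, FiniteDimensional ℂ Z ∧
        Module.finrank ℂ Z =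
          Module.finrank ℂ (LinearMap.range ((projPerpRange B ∘L R : X →L[ℂ] Y) : X →ₗ[ℂ] Y)) ∧
        (∀ y ∈ LinearMap.range ((projPerpRange B ∘L R : X →L[ℂ] Y) : X →ₗ[ℂ] Y),
          ∃! z : X, z ∈ Z ∧ projPerpRange B (R z) = y) ∧
        ∃ PZ : X →L[ℂ] X, IsCompactOperator PZ ∧ PZ ∘L PZ = PZ ∧
          LinearMap.range (PZ : X →ₗ[ℂ] X) = Z ∧
          ∀ x : X, projPerpRange B (R (PZ x)) = projPerpRange B (R x) := by
  set T : X →L[ℂ] Y := projPerpRange B ∘L R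
  obtain ⟨L, hL⟩ := T.exists_rightInverse_rangeRestrict
  exact ⟨inferInstance, LinearMap.range (L : LinearMap.range (T : X →ₗ[ℂ] Y) →ₗ[ℂ] X),
    inferInstance, finrank_range_of_rightInverse hL,
    existsUnique_mem_range_apply_eq_of_rightInverse hL,
    L ∘L T.rangeRestrict, T.isCompactOperator_comp_rangeRestrict L,
    comp_rangeRestrict_idem_of_rightInverse hL, range_comp_rangeRestrict_of_rightInverse hL,
    apply_apply_rangeRestrict_of_rightInverse hL⟩

/-- Abstraction of the construction of the subspace `Z` and the compact
projection `P_Z` in the generalized Helmholtz decomposition (Theorem 3.5):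
if `ran B ⊆ ran R`, `ran B` is closed with finite codimension, and `P` is the
orthogonal projection onto `(ran B)^⊥`, then `ran(PR)` is finite-dimensional,
there is a finite-dimensional `Z ⊆ X` with `dim Z = dim ran(PR)` on which
`PR` restricts bijectively onto `ran(PR)`, and `P_Z := (PR|_Z)⁻¹ PR` is a
compact projection on `X` with range `Z` satisfying `PR ∘ P_Z = PR`. -/
theorem stmt11
    {X Y : Type*} [NormedAddCommGroup X] [InnerProductSpace ℂ X] [CompleteSpace X]
    [NormedAddCommGroup Y] [InnerProductSpace ℂ Y] [CompleteSpace Y]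
    (R : X →L[ℂ] Y) (B : Y →L[ℂ] Y)
    (hsub : LinearMap.range (B : Y →ₗ[ℂ] Y) ≤ LinearMap.range (R : X →ₗ[ℂ] Y))
    (hclosed : IsClosed (LinearMap.range (B : Y →ₗ[ℂ] Y) : Set Y))
    [FiniteDimensional ℂ ((LinearMap.range (B : Y →ₗ[ℂ] Y))ᗮ)] :
    FiniteDimensional ℂ (LinearMap.range ((projPerpRange B ∘L R : X →L[ℂ] Y) : X →ₗ[ℂ] Y)) ∧
      ∃ Z : Submodule ℂ X, FiniteDimensional ℂ Z ∧
        Module.finrank ℂ Z =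
          Module.finrank ℂ (LinearMap.range ((projPerpRange B ∘L R : X →L[ℂ] Y) : X →ₗ[ℂ] Y)) ∧
        (∀ y ∈ LinearMap.range ((projPerpRange B ∘L R : X →L[ℂ] Y) : X →ₗ[ℂ] Y),
          ∃! z : X, z ∈ Z ∧ projPerpRange B (R z) = y) ∧
        ∃ PZ : X →L[ℂ] X, IsCompactOperator PZ ∧ PZ ∘L PZ = PZ ∧
          LinearMap.range (PZ : X →ₗ[ℂ] X) = Z ∧
          ∀ x : X, projPerpRange B (R (PZ x)) = projPerpRange B (R x) :=
  stmt11_general R B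
end
end

section
/- Let θ(ω) := max{0, sup_{x∈D} |arg W(M_ω(x))| − π/2}, where M_ω = iωγρ I − Hess(p) + ρ Hess(φ) + c^{-2}ρ^{-1} ∇p ∇p^⊤ with γ, ρ bounded below by positive constants and p, φ ∈ W^{2,∞}. Then lim_{|ω|→∞} θ(ω) = 0. -/
open Matrix Real

noncomputable section

/-! For a unit vector `ξ`, the quadratic form of `M_ω(x)` is `iωγρ + q`, where `q` is the form of
the real part of `M_ω(x)`. The entries of that real part are bounded uniformly in `x`, so `|q|` is
too, while `|ωγρ| ≥ |ω| γₗ ρₗ → ∞`. A complex number with bounded distance to a point of the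
imaginary axis of large modulus has argument close to `±π/2`, because
`cos (arg z) = Re z / |z| ≥ -K / |z|`. -/

/-- The matrix `M_ω(x) = iωγρ I − Hess p + ρ Hess φ + c⁻²ρ⁻¹ ∇p ∇pᵀ`
(with `Hp = Hess p`, `Hφ = Hess φ`, `gp = ∇p`). -/
def Mfreq (γ ρ c : EuclideanSpace ℝ (Fin 3) → ℝ)
    (gp : EuclideanSpace ℝ (Fin 3) → Fin 3 → ℝ)
    (Hp Hφ : EuclideanSpace ℝ (Fin 3) → Matrix (Fin 3) (Fin 3) ℝ)
    (ω : ℝ) (x : EuclideanSpace ℝ (Fin 3)) : Matrix (Fin 3) (Fin 3) ℂ :=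
  (Complex.I * ω * γ x * ρ x) • (1 : Matrix (Fin 3) (Fin 3) ℂ)
    + (-(Hp x) + ρ x • Hφ x
        + ((c x) ^ 2 * ρ x)⁻¹ • vecMulVec (gp x) (gp x)).map (fun s => (s : ℂ))

theorem Complex.abs_arg_le_pi_div_two_add_of_neg_sin_mul_norm_le_re {ε : ℝ} (hε : 0 ≤ ε)
    {z : ℂ} (h : -(Real.sin ε * ‖z‖) ≤ z.re) : |z.arg| ≤ π / 2 + ε := by
  by_contra! hlt
  have hz : z ≠ 0 := by
    rintro rfl
    simp only [Complex.arg_zero, abs_zero] at hlt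
    linarith [pi_pos]
  have hcos : Real.cos z.arg < -Real.sin ε := by
    rw [← Real.cos_abs, ← Real.cos_add_pi_div_two, add_comm]
    exact cos_lt_cos_of_nonneg_of_le_pi (by linarith [pi_pos]) (Complex.abs_arg_le_pi z) hlt
  have hnorm : 0 < ‖z‖ := norm_pos_iff.mpr hz
  have := mul_lt_mul_of_pos_left hcos hnorm
  rw [Complex.norm_mul_cos_arg] at this
  linarith

theorem Complex.exists_abs_arg_le_pi_div_two_add_of_norm_sub_le (K : ℝ) {ε : ℝ} (hε : 0 < ε) :
    ∃ R, ∀ a z : ℂ, a.re = 0 → R ≤ ‖a‖ → ‖z - a‖ ≤ K → |z.arg| ≤ π / 2 + ε := by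
  set δ := min ε 1
  have hδ : 0 < δ := lt_min hε one_pos
  have hsin : 0 < Real.sin δ :=
    sin_pos_of_pos_of_lt_pi hδ (by linarith [min_le_right ε 1, pi_gt_three])
  refine ⟨K / Real.sin δ + K, fun a z ha hR hK => ?_⟩
  have hre : -K ≤ z.re := by
    have := Complex.abs_re_le_norm (z - a)
    rw [Complex.sub_re, ha, sub_zero] at this
    linarith [neg_abs_le z.re]
  have hnorm : K / Real.sin δ ≤ ‖z‖ := by
    have := norm_sub_norm_le a (a - z)
    rw [sub_sub_cancel, norm_sub_rev] at this
    linarith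
  have hsin_norm : K ≤ Real.sin δ * ‖z‖ := by
    rwa [div_le_iff₀ hsin, mul_comm] at hnorm
  calc |z.arg| ≤ π / 2 + δ :=
        abs_arg_le_pi_div_two_add_of_neg_sin_mul_norm_le_re hδ.le (by linarith)
    _ ≤ π / 2 + ε := by linarith [min_le_left ε 1]

theorem Matrix.star_dotProduct_smul_one_add_mulVec {n R : Type*} [Fintype n] [DecidableEq n]
    [CommSemiring R] [Star R] (a : R) (B : Matrix n n R) (ξ : n → R) :
    star ξ ⬝ᵥ (a • 1 + B) *ᵥ ξ = a * (star ξ ⬝ᵥ ξ) + star ξ ⬝ᵥ B *ᵥ ξ := by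
  rw [add_mulVec, smul_mulVec, one_mulVec, dotProduct_add, dotProduct_smul, smul_eq_mul]

theorem Matrix.norm_star_dotProduct_mulVec_le {n 𝕜 : Type*} [Fintype n] [RCLike 𝕜]
    {B : Matrix n n 𝕜} {C : ℝ} (hB : ∀ i j, ‖B i j‖ ≤ C) {ξ : n → 𝕜} (hξ : ∀ i, ‖ξ i‖ ≤ 1) :
    ‖star ξ ⬝ᵥ B *ᵥ ξ‖ ≤ Fintype.card n ^ 2 * C := by
  have hC : ∀ i j, ‖star (ξ i) * (B i j * ξ j)‖ ≤ C := fun i j => by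
    rw [norm_mul, norm_mul, norm_star]
    calc ‖ξ i‖ * (‖B i j‖ * ‖ξ j‖) ≤ 1 * (C * 1) := by
          gcongr
          exacts [hξ i, (norm_nonneg _).trans (hB i j), hB i j, hξ j]
      _ = C := by ring
  calc ‖star ξ ⬝ᵥ B *ᵥ ξ‖ ≤ ∑ i, ∑ j, ‖star (ξ i) * (B i j * ξ j)‖ := by
        simp only [dotProduct, mulVec, Pi.star_apply, Finset.mul_sum]
        exact (norm_sum_le _ _).trans (Finset.sum_le_sum fun i _ => norm_sum_le _ _)
    _ ≤ ∑ _i : n, ∑ _j : n, C :=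
        Finset.sum_le_sum fun i _ => Finset.sum_le_sum fun j _ => hC i j
    _ = Fintype.card n ^ 2 * C := by simp [sq, mul_assoc]

theorem star_dotProduct_self_eq_one {n : Type*} [Fintype n] {ξ : n → ℂ}
    (hξ : ∑ i, Complex.normSq (ξ i) = 1) : star ξ ⬝ᵥ ξ = 1 := by
  simpa [dotProduct, ← Complex.normSq_eq_conj_mul_self] using congrArg Complex.ofReal hξ

theorem norm_le_one_of_sum_normSq_eq_one {n : Type*} [Fintype n] {ξ : n → ℂ}
    (hξ : ∑ i, Complex.normSq (ξ i) = 1) (i : n) : ‖ξ i‖ ≤ 1 := by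
  have : ‖ξ i‖ ^ 2 ≤ 1 := by
    rw [← hξ, Complex.sq_norm]
    exact Finset.single_le_sum (fun j _ => Complex.normSq_nonneg (ξ j)) (Finset.mem_univ i)
  exact (sq_le_one_iff₀ (norm_nonneg _)).mp this

theorem norm_star_dotProduct_smul_one_add_mulVec_sub_le {n : Type*} [Fintype n] [DecidableEq n]
    (a : ℂ) {B : Matrix n n ℂ} {C : ℝ} (hB : ∀ i j, ‖B i j‖ ≤ C) {ξ : n → ℂ}
    (hξ : ∑ i, Complex.normSq (ξ i) = 1) :
    ‖star ξ ⬝ᵥ (a • 1 + B) *ᵥ ξ - a‖ ≤ Fintype.card n ^ 2 * C := by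
  rw [star_dotProduct_smul_one_add_mulVec, star_dotProduct_self_eq_one hξ, mul_one,
    add_sub_cancel_left]
  exact norm_star_dotProduct_mulVec_le hB (norm_le_one_of_sum_normSq_eq_one hξ)

def Mreal {n : Type*} (ρ c : ℝ) (g : n → ℝ) (Hp Hφ : Matrix n n ℝ) : Matrix n n ℝ :=
  -Hp + ρ • Hφ + (c ^ 2 * ρ)⁻¹ • vecMulVec g g

theorem abs_Mreal_apply_le {n : Type*} {ρ c ρl ρu cl Cb : ℝ} {g : n → ℝ}
    {Hp Hφ : Matrix n n ℝ} (hρl : 0 < ρl) (hρ : ρl ≤ ρ ∧ ρ ≤ ρu) (hcl : 0 < cl) (hc : cl ≤ c)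
    (hHp : ∀ i j, |Hp i j| ≤ Cb) (hHφ : ∀ i j, |Hφ i j| ≤ Cb) (hg : ∀ i, |g i| ≤ Cb) (i j : n) :
    |Mreal ρ c g Hp Hφ i j| ≤ Cb + ρu * Cb + (cl ^ 2 * ρl)⁻¹ * Cb ^ 2 := by
  have hρ0 : 0 < ρ := hρl.trans_le hρ.1
  have hinv : (c ^ 2 * ρ)⁻¹ ≤ (cl ^ 2 * ρl)⁻¹ := by
    gcongr
    exact hρ.1
  simp only [Mreal, Matrix.add_apply, Matrix.neg_apply, Matrix.smul_apply, vecMulVec_apply,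
    smul_eq_mul]
  calc |-Hp i j + ρ * Hφ i j + (c ^ 2 * ρ)⁻¹ * (g i * g j)|
      ≤ |Hp i j| + ρ * |Hφ i j| + (c ^ 2 * ρ)⁻¹ * (|g i| * |g j|) := by
        have hc0 : 0 < c := hcl.trans_le hc
        refine (abs_add_le _ _).trans (add_le_add ((abs_add_le _ _).trans ?_) ?_)
        · rw [abs_neg, abs_mul, abs_of_pos hρ0]
        · rw [abs_mul, abs_mul, abs_of_pos (by positivity)]
    _ ≤ Cb + ρu * Cb + (cl ^ 2 * ρl)⁻¹ * (Cb * Cb) := by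
        have hCb : 0 ≤ Cb := (abs_nonneg _).trans (hg i)
        gcongr
        exacts [hHp i j, hρ0.le.trans hρ.2, hρ.2, hHφ i j, hg i, hg j]
    _ = Cb + ρu * Cb + (cl ^ 2 * ρl)⁻¹ * Cb ^ 2 := by ring

theorem Mfreq_eq_smul_one_add_Mreal (γ ρ c : EuclideanSpace ℝ (Fin 3) → ℝ)
    (gp : EuclideanSpace ℝ (Fin 3) → Fin 3 → ℝ)
    (Hp Hφ : EuclideanSpace ℝ (Fin 3) → Matrix (Fin 3) (Fin 3) ℝ) (ω : ℝ)
    (x : EuclideanSpace ℝ (Fin 3)) :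
    Mfreq γ ρ c gp Hp Hφ ω x = (Complex.I * ω * γ x * ρ x) • 1
      + (Mreal (ρ x) (c x) (gp x) (Hp x) (Hφ x)).map Complex.ofReal := rfl

/-- `θ(ω) := max{0, sup_{x∈D} |arg W(M_ω(x))| − π/2} → 0` as `|ω| → ∞`,
i.e. for every `ε > 0` there is `ω₀` such that for `|ω| ≥ ω₀` every value of
the numerical range of `M_ω(x)`, `x ∈ D`, has argument of modulus at most
`π/2 + ε`. Here the symmetric part is uniformly bounded (`p, φ ∈ W^{2,∞}`)
and `γρ` is uniformly bounded below. -/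
theorem stmt15 (D : Set (EuclideanSpace ℝ (Fin 3)))
    (γ ρ c : EuclideanSpace ℝ (Fin 3) → ℝ)
    (gp : EuclideanSpace ℝ (Fin 3) → Fin 3 → ℝ)
    (Hp Hφ : EuclideanSpace ℝ (Fin 3) → Matrix (Fin 3) (Fin 3) ℝ)
    (γl ρl ρu cl Cb : ℝ) (hγl : 0 < γl) (hρl : 0 < ρl) (hcl : 0 < cl)
    (hγ : ∀ x ∈ D, γl ≤ γ x) (hρ : ∀ x ∈ D, ρl ≤ ρ x ∧ ρ x ≤ ρu)
    (hc : ∀ x ∈ D, cl ≤ c x)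
    (hHp : ∀ x ∈ D, (Hp x).IsSymm ∧ ∀ i j, |Hp x i j| ≤ Cb)
    (hHφ : ∀ x ∈ D, (Hφ x).IsSymm ∧ ∀ i j, |Hφ x i j| ≤ Cb)
    (hgp : ∀ x ∈ D, ∀ i, |gp x i| ≤ Cb) :
    ∀ ε > (0 : ℝ), ∃ ω₀ : ℝ, ∀ ω : ℝ, ω₀ ≤ |ω| →
      ∀ x ∈ D, ∀ ξ : Fin 3 → ℂ, (∑ i, Complex.normSq (ξ i)) = 1 →
        |Complex.arg (star ξ ⬝ᵥ (Mfreq γ ρ c gp Hp Hφ ω x).mulVec ξ)|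
          ≤ π / 2 + ε := by
  intro ε hε
  obtain ⟨R, hR⟩ := Complex.exists_abs_arg_le_pi_div_two_add_of_norm_sub_le
    (Fintype.card (Fin 3) ^ 2 * (Cb + ρu * Cb + (cl ^ 2 * ρl)⁻¹ * Cb ^ 2)) hε
  refine ⟨R / (γl * ρl), fun ω hω x hx ξ hξ => ?_⟩
  have hγx : 0 < γ x := hγl.trans_le (hγ x hx)
  have hρx : 0 < ρ x := hρl.trans_le (hρ x hx).1
  rw [Mfreq_eq_smul_one_add_Mreal]
  refine hR _ _ (by simp) ?_
    (norm_star_dotProduct_smul_one_add_mulVec_sub_le _ (fun i j => ?_) hξ)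
  · calc R = R / (γl * ρl) * (γl * ρl) := (div_mul_cancel₀ _ (by positivity)).symm
      _ ≤ |ω| * (γ x * ρ x) :=
        mul_le_mul hω (mul_le_mul (hγ x hx) (hρ x hx).1 hρl.le hγx.le) (by positivity)
          (abs_nonneg ω)
      _ = ‖Complex.I * ω * γ x * ρ x‖ := by simp [abs_of_pos hγx, abs_of_pos hρx, mul_assoc]
  · rw [Matrix.map_apply, Complex.norm_real, Real.norm_eq_abs]
    exact abs_Mreal_apply_le hρl (hρ x hx) hcl (hc x hx) (hHp x hx).2 (hHφ x hx).2
      (hgp x hx) i j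
end
end
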